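/- For any ordering σ of {2,…,n}, the σ-minimal assignment is sd-efficient: if x is not σ-dominated by any other assignment, then x admits no improving cycle. -/

import Mathlib

/-! If `x` had an improving cycle `(a k, ob k)`, let every agent `a k` trade `ε = min_k x (a k) (ob k)`
of its share of `ob k` for the same amount of the preferred `ob (k - 1)`. The result `y` is still
bistochastic, and no tail probability increases, while that of agent `a 0` at the rank of `ob 0`
strictly decreases; this rank is not the top one, so it is some `σ j`. Sorting is monotone, so every
block of `B^{y,σ}` lies pointwise below that of `x`, and block `j` has a strictly smaller sum. A
pointwise smaller, different vector is lexicographically smaller, so `y` σ-dominates `x`. -/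

open Finset

/-- An n×n matrix with nonnegative real entries whose rows and columns each sum to 1. -/
def Bistochastic {n : ℕ} (x : Fin n → Fin n → ℝ) : Prop :=
  (∀ i o, 0 ≤ x i o) ∧ (∀ i, ∑ o, x i o = 1) ∧ (∀ o, ∑ i, x i o = 1)

/-- `tailProb rank x i k` = probability that agent `i` receives an object ranked `k`-th
or worse (ranks are 0-indexed: rank 0 = most preferred). -/
def tailProb {n : ℕ} (rank : Fin n → Fin n → Fin n) (x : Fin n → Fin n → ℝ)
    (i k : Fin n) : ℝ :=
  ∑ o ∈ Finset.univ.filter (fun o => k ≤ rank i o), x i o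

/-- The values of `v` rearranged in non-increasing order. -/
noncomputable def sortedDesc {n : ℕ} (v : Fin n → ℝ) : Fin n → ℝ :=
  fun j => v (Tuple.sort (fun i => -v i) j)

/-- Block `t` of `Bvec rank x` is the non-increasing rearrangement of the tail
probabilities at threshold `n-1-t`; so blocks run from the worst rank down. -/
noncomputable def Bvec {n : ℕ} (rank : Fin n → Fin n → Fin n) (x : Fin n → Fin n → ℝ) :
    Fin n → Fin n → ℝ :=
  fun t => sortedDesc (fun i => tailProb rank x i t.rev)

/-- Lexicographic strict order on doubly-indexed vectors (outer index first). -/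
def BlockLexLt {α β : Type*} [LinearOrder α] [LinearOrder β] (u v : α → β → ℝ) : Prop :=
  ∃ t s, u t s < v t s ∧ ∀ t' s', (t' < t ∨ (t' = t ∧ s' < s)) → u t' s' = v t' s'

/-- `x` Rawlsian-dominates `y`. -/
def RDom {n : ℕ} (rank : Fin n → Fin n → Fin n) (x y : Fin n → Fin n → ℝ) : Prop :=
  BlockLexLt (Bvec rank x) (Bvec rank y)

/-- A Rawlsian assignment: a bistochastic matrix not R-dominated by any other. -/
def Rawlsian {n : ℕ} (rank : Fin n → Fin n → Fin n) (x : Fin n → Fin n → ℝ) : Prop :=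
  Bistochastic x ∧ ∀ y, Bistochastic y → ¬ RDom rank y x

/-- `Bσ`: block `j` is the non-increasing rearrangement of the tail probabilities at
threshold `σ j`. -/
noncomputable def BvecSigma {m : ℕ} (σ : Fin m → Fin (m + 1))
    (rank : Fin (m + 1) → Fin (m + 1) → Fin (m + 1)) (x : Fin (m + 1) → Fin (m + 1) → ℝ) :
    Fin m → Fin (m + 1) → ℝ :=
  fun j => sortedDesc (fun i => tailProb rank x i (σ j))

def SigmaDom {m : ℕ} (σ : Fin m → Fin (m + 1))
    (rank : Fin (m + 1) → Fin (m + 1) → Fin (m + 1)) (x y : Fin (m + 1) → Fin (m + 1) → ℝ) :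
    Prop :=
  BlockLexLt (BvecSigma σ rank x) (BvecSigma σ rank y)

def SigmaMinimal {m : ℕ} (σ : Fin m → Fin (m + 1))
    (rank : Fin (m + 1) → Fin (m + 1) → Fin (m + 1)) (x : Fin (m + 1) → Fin (m + 1) → ℝ) :
    Prop :=
  Bistochastic x ∧ ∀ y, Bistochastic y → ¬ SigmaDom σ rank y x

/-- `x` admits an improving cycle: distinct agents `a 0,…,a K` and distinct objects
`ob 0,…,ob K` with `x (a k) (ob k) > 0` and each agent `a k` strictly preferring
`ob (k-1)` (cyclically) to `ob k`. -/
def HasImprovingCycle {n : ℕ} (rank : Fin n → Fin n → Fin n) (x : Fin n → Fin n → ℝ) : Prop :=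
  ∃ K : ℕ, ∃ a ob : Fin (K + 1) → Fin n, Function.Injective a ∧ Function.Injective ob ∧
    (∀ k, 0 < x (a k) (ob k)) ∧ ∀ k, rank (a k) (ob (k - 1)) < rank (a k) (ob k)


lemma sortedDesc_antitone {n : ℕ} (v : Fin n → ℝ) : Antitone (sortedDesc v) := by
  intro s t hst
  simpa [sortedDesc] using Tuple.monotone_sort (fun i => -v i) hst

lemma sum_sortedDesc {n : ℕ} (v : Fin n → ℝ) : ∑ j, sortedDesc v j = ∑ i, v i :=
  Equiv.sum_comp (Tuple.sort (fun i => -v i)) v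

lemma succ_le_card_filter_sortedDesc_le {n : ℕ} (v : Fin n → ℝ) (j : Fin n) :
    (j : ℕ) + 1 ≤ #{i | sortedDesc v j ≤ v i} := by
  let π := Tuple.sort (fun i => -v i)
  calc (j : ℕ) + 1 = #((Iic j).image π) := by
        rw [card_image_of_injective _ π.injective, Fin.card_Iic]
    _ ≤ #{i | sortedDesc v j ≤ v i} := by
        refine card_le_card fun i hi => ?_
        obtain ⟨s, hs, rfl⟩ := mem_image.1 hi
        exact mem_filter.2 ⟨mem_univ _, sortedDesc_antitone v (mem_Iic.1 hs)⟩

lemma card_filter_le_le_of_sortedDesc_lt {n : ℕ} {v : Fin n → ℝ} {j : Fin n} {c : ℝ}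
    (hc : sortedDesc v j < c) : #{i | c ≤ v i} ≤ j := by
  let τ := Tuple.sort (fun i => -v i)
  calc #{i | c ≤ v i} ≤ #((Iio j).image τ) := by
        refine card_le_card fun i hi => mem_image.2 ⟨τ.symm i, mem_Iio.2 ?_, τ.apply_symm_apply i⟩
        by_contra! hji
        have h := sortedDesc_antitone v hji
        rw [show sortedDesc v (τ.symm i) = v i by simp [sortedDesc, τ]] at h
        linarith [(mem_filter.1 hi).2]
    _ ≤ j := card_image_le.trans_eq (Fin.card_Iio j)

lemma sortedDesc_mono {n : ℕ} {w v : Fin n → ℝ} (h : w ≤ v) : sortedDesc w ≤ sortedDesc v := by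
  intro j
  by_contra! hlt
  have hsub : #{i | sortedDesc w j ≤ w i} ≤ #{i | sortedDesc w j ≤ v i} :=
    card_le_card fun i hi => mem_filter.2 ⟨mem_univ i, (mem_filter.1 hi).2.trans (h i)⟩
  have := succ_le_card_filter_sortedDesc_le w j
  have := card_filter_le_le_of_sortedDesc_lt hlt
  omega

lemma blockLexLt_of_lt {α β : Type*} [LinearOrder α] [LinearOrder β] [Finite α] [Finite β]
    {u v : α → β → ℝ} (h : u < v) : BlockLexLt u v := by
  have huv : Function.uncurry u < Function.uncurry v := by
    obtain ⟨hle, t, ht⟩ := Pi.lt_def.1 h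
    obtain ⟨s, hts⟩ := (Pi.lt_def.1 ht).2
    exact Pi.lt_def.2 ⟨fun p => hle p.1 p.2, (t, s), hts⟩
  obtain ⟨⟨t, s⟩, hmin, hlt⟩ := Pi.lex_lt_of_lt_of_preorder
    (WellFounded.prod_lex wellFounded_lt wellFounded_lt) huv
  exact ⟨t, s, hlt, fun t' s' hlex => (hmin (t', s') (Prod.lex_iff.2 hlex)).elim le_antisymm⟩

section CycleShift

variable {n K : ℕ} (a ob : Fin (K + 1) → Fin n)

def cycleShift (i o : Fin n) : ℝ :=
  ∑ k, if i = a k then (if o = ob (k - 1) then 1 else 0) - (if o = ob k then 1 else 0) else 0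

lemma sum_cycleShift_row (i : Fin n) : ∑ o, cycleShift a ob i o = 0 := by
  simp only [cycleShift]
  rw [sum_comm]
  refine sum_eq_zero fun k _ => ?_
  split_ifs <;> simp

lemma sum_cycleShift_col (o : Fin n) : ∑ i, cycleShift a ob i o = 0 := by
  simp only [cycleShift, sum_comm (γ := Fin n), sum_ite_eq', mem_univ, if_true, sum_sub_distrib]
  rw [sub_eq_zero]
  exact Fintype.sum_equiv (Equiv.subRight 1) _ _ fun k => rfl

variable {a} in
lemma cycleShift_apply_self (ha : Function.Injective a) (k : Fin (K + 1)) (o : Fin n) :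
    cycleShift a ob (a k) o = (if o = ob (k - 1) then 1 else 0) - (if o = ob k then 1 else 0) := by
  rw [cycleShift, sum_eq_single k (fun l _ hl => if_neg fun h => hl (ha h).symm) (by simp),
    if_pos rfl]

variable {a} in
lemma cycleShift_apply_of_notMem_range {i : Fin n} (hi : i ∉ Set.range a) (o : Fin n) :
    cycleShift a ob i o = 0 :=
  sum_eq_zero fun k _ => if_neg fun h => hi ⟨k, h.symm⟩

variable {a ob} in
lemma bistochastic_add_smul_cycleShift {x : Fin n → Fin n → ℝ} (hx : Bistochastic x)
    (ha : Function.Injective a) {ε : ℝ} (hε : 0 ≤ ε) (hεx : ∀ k, ε ≤ x (a k) (ob k)) :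
    Bistochastic (x + ε • cycleShift a ob) := by
  obtain ⟨hnn, hrow, hcol⟩ := hx
  refine ⟨fun i o => ?_, fun i => ?_, fun o => ?_⟩
  · simp only [Pi.add_apply, Pi.smul_apply, smul_eq_mul]
    by_cases hi : i ∈ Set.range a
    · obtain ⟨k, rfl⟩ := hi
      rw [cycleShift_apply_self ob ha]
      have := hεx k
      have := hnn (a k) o
      split_ifs <;> subst_vars <;> nlinarith
    · simpa [cycleShift_apply_of_notMem_range ob hi] using hnn i o
  · simp [sum_add_distrib, ← mul_sum, hrow, sum_cycleShift_row]
  · simp [sum_add_distrib, ← mul_sum, hcol, sum_cycleShift_col]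

lemma tailProb_cycleShift {rank : Fin n → Fin n → Fin n} (i t : Fin n) :
    tailProb rank (cycleShift a ob) i t = ∑ k, if i = a k then
      (if t ≤ rank i (ob (k - 1)) then 1 else 0) - (if t ≤ rank i (ob k) then 1 else 0) else 0 := by
  simp only [tailProb, cycleShift]
  rw [sum_comm]
  refine sum_congr rfl fun k _ => ?_
  by_cases hi : i = a k
  · subst hi
    simp [sum_sub_distrib, sum_ite_eq', mem_filter]
  · simp [hi]

end CycleShift

lemma tailProb_add_smul {n : ℕ} (rank : Fin n → Fin n → Fin n) (x c : Fin n → Fin n → ℝ) (ε : ℝ)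
    (i t : Fin n) : tailProb rank (x + ε • c) i t = tailProb rank x i t + ε * tailProb rank c i t := by
  simp [tailProb, sum_add_distrib, mul_sum]

section ImprovingCycle

variable {n K : ℕ} {rank : Fin n → Fin n → Fin n} {a ob : Fin (K + 1) → Fin n}

lemma tailProb_cycleShift_term_nonpos (himp : ∀ k, rank (a k) (ob (k - 1)) < rank (a k) (ob k))
    (i t : Fin n) (k : Fin (K + 1)) :
    (if i = a k then (if t ≤ rank i (ob (k - 1)) then 1 else 0) -
      (if t ≤ rank i (ob k) then 1 else 0) else 0 : ℝ) ≤ 0 := by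
  split_ifs with _ h₁ h₂ h₂ <;> subst_vars <;> norm_num
  exact h₂ (h₁.trans (himp k).le)

lemma tailProb_cycleShift_nonpos (himp : ∀ k, rank (a k) (ob (k - 1)) < rank (a k) (ob k))
    (i t : Fin n) : tailProb rank (cycleShift a ob) i t ≤ 0 := by
  rw [tailProb_cycleShift]
  exact sum_nonpos fun k _ => tailProb_cycleShift_term_nonpos himp i t k

lemma tailProb_cycleShift_neg (himp : ∀ k, rank (a k) (ob (k - 1)) < rank (a k) (ob k))
    (k : Fin (K + 1)) : tailProb rank (cycleShift a ob) (a k) (rank (a k) (ob k)) < 0 := by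
  rw [tailProb_cycleShift]
  refine (sum_lt_sum (g := fun _ => 0) (fun l _ => tailProb_cycleShift_term_nonpos himp _ _ l)
    ⟨k, mem_univ k, ?_⟩).trans_eq sum_const_zero
  simp [(himp k).not_ge]

end ImprovingCycle

lemma mem_range_of_injective_of_ne_zero {m : ℕ} {σ : Fin m → Fin (m + 1)}
    (hσinj : Function.Injective σ) (hσne : ∀ j, σ j ≠ 0) {t : Fin (m + 1)} (ht : t ≠ 0) :
    t ∈ Set.range σ := by
  let σ' : Fin m → {t : Fin (m + 1) // t ≠ 0} := fun j => ⟨σ j, hσne j⟩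
  have hσ' : Function.Bijective σ' :=
    (Fintype.bijective_iff_injective_and_card σ').2
      ⟨fun j j' h => hσinj (congrArg Subtype.val h), by simp⟩
  obtain ⟨j, hj⟩ := hσ'.2 ⟨t, ht⟩
  exact ⟨j, congrArg Subtype.val hj⟩

lemma sigmaDom_of_tailProb_lt {m : ℕ} {σ : Fin m → Fin (m + 1)}
    {rank : Fin (m + 1) → Fin (m + 1) → Fin (m + 1)} {x y : Fin (m + 1) → Fin (m + 1) → ℝ}
    (hle : ∀ i t, tailProb rank y i t ≤ tailProb rank x i t) {i₀ t₀ : Fin (m + 1)}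
    (hlt : tailProb rank y i₀ t₀ < tailProb rank x i₀ t₀) (ht₀ : t₀ ∈ Set.range σ) :
    SigmaDom σ rank y x := by
  have hblock_le (j : Fin m) : BvecSigma σ rank y j ≤ BvecSigma σ rank x j :=
    sortedDesc_mono fun i => hle i (σ j)
  obtain ⟨j, rfl⟩ := ht₀
  have hsum : ∑ s, BvecSigma σ rank y j s < ∑ s, BvecSigma σ rank x j s := by
    simp only [BvecSigma, sum_sortedDesc]
    exact sum_lt_sum (fun i _ => hle i (σ j)) ⟨i₀, mem_univ _, hlt⟩
  obtain ⟨s, -, hs⟩ := exists_lt_of_sum_lt hsum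
  exact blockLexLt_of_lt (Pi.lt_def.2 ⟨hblock_le, j, Pi.lt_def.2 ⟨hblock_le j, s, hs⟩⟩)

theorem sigma_minimal_sdefficient_general {m : ℕ} (σ : Fin m → Fin (m + 1))
    (hσinj : Function.Injective σ) (hσne : ∀ j, σ j ≠ 0)
    (rank : Fin (m + 1) → Fin (m + 1) → Fin (m + 1))
    (x : Fin (m + 1) → Fin (m + 1) → ℝ) (hx : SigmaMinimal σ rank x) :
    ¬ HasImprovingCycle rank x := by
  rintro ⟨K, a, ob, ha, -, hpos, himp⟩
  obtain ⟨hxbis, hmin⟩ := hx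
  let ε := univ.inf' univ_nonempty fun k => x (a k) (ob k)
  have hε : 0 < ε := (lt_inf'_iff _).2 fun k _ => hpos k
  have hεx (k : Fin (K + 1)) : ε ≤ x (a k) (ob k) := inf'_le _ (mem_univ k)
  let y := x + ε • cycleShift a ob
  refine hmin y (bistochastic_add_smul_cycleShift hxbis ha hε.le hεx) ?_
  have ht₀ : rank (a 0) (ob 0) ≠ 0 := ((Fin.zero_le _).trans_lt (himp 0)).ne'
  refine sigmaDom_of_tailProb_lt (i₀ := a 0) (fun i t => ?_) ?_
    (mem_range_of_injective_of_ne_zero hσinj hσne ht₀)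
  · rw [tailProb_add_smul]
    linarith [mul_nonpos_of_nonneg_of_nonpos hε.le (tailProb_cycleShift_nonpos himp i t)]
  · rw [tailProb_add_smul]
    linarith [mul_neg_of_pos_of_neg hε (tailProb_cycleShift_neg himp 0)]

/-- For any ordering `σ` of `{2,…,n}`, the σ-minimal assignment admits no improving
cycle (hence is sd-efficient). -/
theorem sigma_minimal_sdefficient {m : ℕ} (σ : Fin m → Fin (m + 1))
    (hσinj : Function.Injective σ) (hσne : ∀ j, σ j ≠ 0)
    (rank : Fin (m + 1) → Fin (m + 1) → Fin (m + 1))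
    (hrank : ∀ i, Function.Bijective (rank i))
    (x : Fin (m + 1) → Fin (m + 1) → ℝ) (hx : SigmaMinimal σ rank x) :
    ¬ HasImprovingCycle rank x :=
  sigma_minimal_sdefficient_general σ hσinj hσne rank x hx
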